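/- Let n ∈ ℕ with n > 1 and let γ₁,…,γₙ ∈ ℝ satisfy 0 ≤ γᵢ ≤ 1/2 for all i, with at least one γᵢ ≠ 0. Let Ṽ_{γ₁,…,γₙ} be the normalised gonosomal operator with these parameters. Then Ṽ_{γ₁,…,γₙ} maps S^{n,1} into S^{n,1} if and only if γᵢ ≠ 0 for every i ∈ {1,…,n}. -/
import Mathlib


open Finset

/-- The gonosomal operator with a single male genotype and parameters `γ₁,…,γₙ`,
acting on pairs `(x, u)` with `x : Fin n → ℝ` the female genotype frequencies and
`u : ℝ` the male genotype frequency.  The coordinate of index `0` plays the role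
of `x₁`. -/
noncomputable def gonOp (n : ℕ) (γ : Fin n → ℝ) (p : (Fin n → ℝ) × ℝ) :
    (Fin n → ℝ) × ℝ :=
  (fun j =>
    if (j : ℕ) = 0 then p.2 * ∑ i, γ i * p.1 i
    else p.2 * ∑ i, ((1 - 2 * γ i) / ((n : ℝ) - 1)) * p.1 i,
   p.2 * ∑ i, γ i * p.1 i)

/-- The normalised gonosomal operator with parameters `γ₁,…,γₙ`. -/
noncomputable def ngonOp (n : ℕ) (γ : Fin n → ℝ) (p : (Fin n → ℝ) × ℝ) :
    (Fin n → ℝ) × ℝ :=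
  (fun j =>
    if (j : ℕ) = 0 then (∑ i, γ i * p.1 i) / (∑ i, p.1 i)
    else (∑ i, (1 - 2 * γ i) * p.1 i) / (((n : ℝ) - 1) * ∑ i, p.1 i),
   (∑ i, γ i * p.1 i) / (∑ i, p.1 i))

/-- The set `S^{n,1}` of frequency distributions. -/
def Sn1 (n : ℕ) : Set ((Fin n → ℝ) × ℝ) :=
  {p | (∀ i, 0 ≤ p.1 i) ∧ 0 ≤ p.2 ∧ 0 < ∑ i, p.1 i ∧ 0 < p.2 ∧ (∑ i, p.1 i) + p.2 = 1}

lemma sum_if_zero_const (m : ℕ) (a b : ℝ) :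
    ∑ j : Fin (m + 1), (if (j : ℕ) = 0 then a else b) = a + m * b := by
  rw [Fin.sum_univ_succ]
  simp [Fin.val_succ, Finset.sum_const, nsmul_eq_mul]

theorem ngonOp_maps_Sn1_iff (n : ℕ) (hn : 1 < n) (γ : Fin n → ℝ)
    (hγ : ∀ i, 0 ≤ γ i ∧ γ i ≤ 1 / 2) (hne : ∃ i, γ i ≠ 0) :
    (∀ p ∈ Sn1 n, ngonOp n γ p ∈ Sn1 n) ↔ ∀ i, γ i ≠ 0 := by
  constructor
  · intro h i hγi0
    set p : (Fin n → ℝ) × ℝ := (fun j => if j = i then (1/2 : ℝ) else 0, (1/2 : ℝ)) with hpdef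
    have hx1 : ∑ j, p.1 j = 1/2 := by simp [hpdef, Finset.sum_ite_eq']
    have hp : p ∈ Sn1 n := by
      refine ⟨fun j => ?_, by norm_num [hpdef], by rw [hx1]; norm_num,
        by norm_num [hpdef], by rw [hx1]; norm_num [hpdef]⟩
      by_cases hj : j = i <;> simp [hpdef, hj]
    have h2 := (h p hp).2.2.2.1
    have hγs : ∑ j, γ j * p.1 j = 0 := by
      simp [hpdef, mul_ite, mul_zero, Finset.sum_ite_eq', hγi0]
    rw [show (ngonOp n γ p).2 = (∑ j, γ j * p.1 j) / (∑ j, p.1 j) from rfl, hγs] at h2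
    simp at h2
  · intro h p hp
    obtain ⟨m, rfl⟩ : ∃ m, n = m + 1 := ⟨n - 1, by omega⟩
    have hm : 1 ≤ m := by omega
    have hmR : (0 : ℝ) < m := by exact_mod_cast Nat.pos_of_ne_zero (by omega)
    have hγpos : ∀ i, 0 < γ i := fun i => lt_of_le_of_ne (hγ i).1 (Ne.symm (h i))
    obtain ⟨hx, hu, hα, hupos, hsum⟩ := hp
    set α := ∑ i, p.1 i with hαdef
    set S := ∑ i, γ i * p.1 i with hSdef
    set T := ∑ i, (1 - 2 * γ i) * p.1 i with hTdef
    have hS : 0 < S := by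
      obtain ⟨i, _, hi⟩ := Finset.exists_lt_of_sum_lt (by simpa using hα :
        ∑ _i : Fin (m+1), (0:ℝ) < ∑ i, p.1 i)
      exact Finset.sum_pos' (fun j _ => mul_nonneg (hγ j).1 (hx j))
        ⟨i, Finset.mem_univ i, mul_pos (hγpos i) hi⟩
    have hT : 0 ≤ T := Finset.sum_nonneg fun i _ =>
      mul_nonneg (by linarith [(hγ i).2]) (hx i)
    have hkey : 2 * S + T = α := by
      rw [hSdef, hTdef, hαdef, Finset.mul_sum, ← Finset.sum_add_distrib]
      exact Finset.sum_congr rfl fun i _ => by ring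
    have hcast : ((m + 1 : ℕ) : ℝ) - 1 = (m : ℝ) := by push_cast; ring
    have hS0 : 0 < S / α := div_pos hS hα
    have hT0 : 0 ≤ T / ((m : ℝ) * α) := div_nonneg hT (le_of_lt (mul_pos hmR hα))
    have hq1 : ∀ j, (ngonOp (m+1) γ p).1 j =
        if (j : ℕ) = 0 then S / α else T / ((m : ℝ) * α) := by
      intro j
      simp only [ngonOp, hcast, hSdef, hTdef, hαdef]
    have hsum' : ∑ j, (ngonOp (m+1) γ p).1 j = S / α + T / α := by
      rw [Finset.sum_congr rfl fun j _ => hq1 j, sum_if_zero_const]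
      field_simp
    refine ⟨fun j => ?_, le_of_lt hS0, ?_, hS0, ?_⟩
    · rw [hq1 j]; split <;> [exact le_of_lt hS0; exact hT0]
    · rw [hsum']
      have : 0 ≤ T / α := div_nonneg hT (le_of_lt hα)
      linarith
    · rw [hsum', show (ngonOp (m+1) γ p).2 = S / α from rfl]
      field_simp
      linarith
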